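/- arXiv:1207.5198 — 3 statements merged into one kernel-verified Lean document; each statement's English description precedes it below -/
import Mathlib

section
/- Let n and x be natural numbers with x ≤ n, and let τ be the unique real number in (0,1) with I_n(τ, x) = I_n(1 − τ, n − x). Then τ is the unique zero of J_n(·, x) in the open interval (0, 1): J_n(τ, x) = 0, and every a ∈ (0,1) with J_n(a, x) = 0 equals τ. -/
/-- `I_n(a, x) = a^{x+2} ∫₀¹ t^{x+1} (1 − t) (1 − a t)^{n−x} dt`. -/
noncomputable def In (n x : ℕ) (a : ℝ) : ℝ :=
  a ^ (x + 2) * ∫ t in (0 : ℝ)..1, t ^ (x + 1) * (1 - t) * (1 - a * t) ^ (n - x)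

/-- The polynomial `J_n(a, x)`. -/
noncomputable def Jn (n x : ℕ) (a : ℝ) : ℝ :=
  2 * a ^ (x + 2) * ∑ r ∈ Finset.range (n - x + 1),
      ((n + 3).choose (n - x - r) : ℝ) * ((x + r).choose r : ℝ) * (-1) ^ r * a ^ r
    - ((n : ℝ) - x + 1) * ((n : ℝ) + 3) * a + ((n : ℝ) - x + 1) * ((x : ℝ) + 1)

/-!
Write `n = x + d`. Substituting `s = a t` gives `a I_n(a, x) = ∫₀^a s^{x+1} (a − s) (1 − s)^d ds`,
and reflecting `s ↦ 1 − s` gives `(1 − a) I_n(1 − a, d) = ∫_a^1 s^x (1 − s)^{d+1} (s − a) ds`.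
Hence `a (1 − a) (I_n(1 − a, d) − I_n(a, x))` is `a` times a Beta-type integral over `[0, 1]`
plus `∫₀^a s^x (1 − s)^d (a − s)² ds`; expanding `(1 − s)^d` binomially identifies it with
`x! d! / (n + 3)! · a J_n(a, x)`. So on `(0, 1)` the zeros of `J_n(·, x)` are the solutions of
`I_n(a, x) = I_n(1 − a, d)`. As `I_n(a, y) = a⁻¹ ∫₀^a (a − s) s^{y+1} (1 − s)^{n−y} ds` is
strictly increasing in `a ∈ (0, 1]`, `a ↦ I_n(a, x) − I_n(1 − a, d)` is injective on `(0, 1)`,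
so `τ` is the only solution.
-/

open intervalIntegral Finset Set
open scoped Nat

theorem integral_pow_mul_one_sub_pow (m k : ℕ) :
    ∫ s in (0 : ℝ)..1, s ^ m * (1 - s) ^ k = m ! * k ! / (m + k + 1)! := by
  induction k generalizing m with
  | zero =>
    simp [integral_pow, Nat.factorial_succ]
    field_simp
  | succ k ih =>
    have hsplit : ∫ s in (0 : ℝ)..1, s ^ m * (1 - s) ^ (k + 1)
        = (∫ s in (0 : ℝ)..1, s ^ m * (1 - s) ^ k)
          - ∫ s in (0 : ℝ)..1, s ^ (m + 1) * (1 - s) ^ k := by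
      rw [← integral_sub (Continuous.intervalIntegrable (by fun_prop) _ _)
        (Continuous.intervalIntegrable (by fun_prop) _ _)]
      exact integral_congr fun s _ => by ring
    rw [hsplit, ih, ih, show m + 1 + k + 1 = m + k + 1 + 1 by ring,
      show m + (k + 1) + 1 = m + k + 1 + 1 by ring, Nat.factorial_succ (m + k + 1),
      Nat.factorial_succ m, Nat.factorial_succ k]
    push_cast
    field_simp
    ring

theorem integral_pow_mul_sub_pow (a : ℝ) (m k : ℕ) :
    ∫ s in (0 : ℝ)..a, s ^ m * (a - s) ^ k = a ^ (m + k + 1) * (m ! * k ! / (m + k + 1)!) := by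
  calc ∫ s in (0 : ℝ)..a, s ^ m * (a - s) ^ k
      = a • ∫ t in (0 : ℝ)..1, (a * t) ^ m * (a - a * t) ^ k := by
        simpa using (smul_integral_comp_mul_left (fun s => s ^ m * (a - s) ^ k) a
          (a := (0 : ℝ)) (b := 1)).symm
    _ = a ^ (m + k + 1) * ∫ t in (0 : ℝ)..1, t ^ m * (1 - t) ^ k := by
        rw [smul_eq_mul, ← integral_const_mul, ← integral_const_mul]
        exact integral_congr fun t _ => by rw [← mul_one_sub, mul_pow, mul_pow]; ring
    _ = _ := by rw [integral_pow_mul_one_sub_pow]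

theorem factorial_mul_choose_div_eq (x d r : ℕ) (hr : r ≤ d) :
    ((x + d + 3)! : ℝ) * d.choose r * (x + r)! / (x + r + 3)!
      = x ! * d ! * ((x + d + 3).choose (d - r) * (x + r).choose r) := by
  rw [Nat.cast_choose ℝ hr, Nat.cast_choose ℝ (by omega : d - r ≤ x + d + 3),
    Nat.cast_choose ℝ (by omega : r ≤ x + r), show x + d + 3 - (d - r) = x + r + 3 by omega,
    Nat.add_sub_cancel]
  field_simp

theorem factorial_mul_integral_pow_mul_one_sub_pow_mul_sq (x d : ℕ) (a : ℝ) :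
    (x + d + 3)! * ∫ s in (0 : ℝ)..a, s ^ x * (1 - s) ^ d * (a - s) ^ 2
      = x ! * d ! * (2 * a ^ (x + 3) * ∑ r ∈ range (d + 1),
          ((x + d + 3).choose (d - r) : ℝ) * ((x + r).choose r : ℝ) * (-1) ^ r * a ^ r) := by
  have hexpand : ∫ s in (0 : ℝ)..a, s ^ x * (1 - s) ^ d * (a - s) ^ 2
      = ∑ r ∈ range (d + 1),
          (d.choose r * (-1) ^ r : ℝ) * ∫ s in (0 : ℝ)..a, s ^ (x + r) * (a - s) ^ 2 := by
    simp_rw [← integral_const_mul]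
    rw [← integral_finsetSum fun r _ => Continuous.intervalIntegrable (by fun_prop) _ _]
    refine integral_congr fun s _ => ?_
    rw [sub_eq_neg_add, add_pow, mul_sum, sum_mul]
    refine sum_congr rfl fun r _ => ?_
    rw [neg_pow, pow_add]
    ring
  rw [hexpand, mul_sum, mul_sum, mul_sum]
  refine sum_congr rfl fun r hr => ?_
  rw [integral_pow_mul_sub_pow, show x + r + 2 + 1 = x + r + 3 by ring, Nat.factorial_two]
  linear_combination (2 * (-1) ^ r * a ^ (x + r + 3) : ℝ) *
    factorial_mul_choose_div_eq x d r (by simpa [Nat.lt_succ_iff] using hr)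

theorem factorial_mul_integral_pow_mul_one_sub_pow_mul_sub (x d : ℕ) (a : ℝ) :
    (x + d + 3)! * ∫ s in (0 : ℝ)..1, s ^ x * (1 - s) ^ d * (1 - s) * (s - a)
      = x ! * d ! * ((d + 1) * ((x + 1) - (x + d + 3) * a)) := by
  have hexpand : ∫ s in (0 : ℝ)..1, s ^ x * (1 - s) ^ d * (1 - s) * (s - a)
      = (∫ s in (0 : ℝ)..1, s ^ (x + 1) * (1 - s) ^ (d + 1))
        - a * ∫ s in (0 : ℝ)..1, s ^ x * (1 - s) ^ (d + 1) := by
    rw [← integral_const_mul, ← integral_sub (Continuous.intervalIntegrable (by fun_prop) _ _)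
      (Continuous.intervalIntegrable (by fun_prop) _ _)]
    exact integral_congr fun s _ => by ring
  rw [hexpand, integral_pow_mul_one_sub_pow, integral_pow_mul_one_sub_pow,
    show x + 1 + (d + 1) + 1 = x + d + 2 + 1 by ring, show x + (d + 1) + 1 = x + d + 2 by ring]
  simp only [Nat.factorial_succ]
  push_cast
  field_simp
  ring

theorem mul_In_eq_integral (n y : ℕ) (a : ℝ) :
    a * In n y a = ∫ s in (0 : ℝ)..a, s ^ (y + 1) * (a - s) * (1 - s) ^ (n - y) := by
  calc a * In n y a
      = a • ∫ t in (0 : ℝ)..1, (a * t) ^ (y + 1) * (a - a * t) * (1 - a * t) ^ (n - y) := by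
        rw [In, smul_eq_mul, ← mul_assoc, ← integral_const_mul, ← integral_const_mul]
        exact integral_congr fun t _ => by ring
    _ = _ := by
        simpa using smul_integral_comp_mul_left
          (fun s => s ^ (y + 1) * (a - s) * (1 - s) ^ (n - y)) a (a := (0 : ℝ)) (b := 1)

theorem one_sub_mul_In_one_sub_eq_integral (n y : ℕ) (a : ℝ) :
    (1 - a) * In n y (1 - a) = ∫ s in a..1, s ^ (n - y) * (1 - s) ^ (y + 1) * (s - a) := by
  rw [mul_In_eq_integral]
  simpa [mul_comm, mul_left_comm] using (integral_comp_sub_left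
    (fun u => u ^ (y + 1) * (1 - a - u) * (1 - u) ^ (n - y)) 1 (a := a) (b := 1)).symm

theorem mul_integral_sub_one_sub_mul_integral {g : ℝ → ℝ} (hg : Continuous g) (a : ℝ) :
    a * (∫ s in a..1, g s * (1 - s) * (s - a)) - (1 - a) * ∫ s in (0 : ℝ)..a, g s * s * (a - s)
      = a * (∫ s in (0 : ℝ)..1, g s * (1 - s) * (s - a))
        + ∫ s in (0 : ℝ)..a, g s * (a - s) ^ 2 := by
  have hint : ∀ h : ℝ → ℝ, Continuous h → IntervalIntegrable h MeasureTheory.volume 0 a :=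
    fun h hh => hh.intervalIntegrable 0 a
  have hleft : (1 - a) * (∫ s in (0 : ℝ)..a, g s * s * (a - s))
      + a * (∫ s in (0 : ℝ)..a, g s * (1 - s) * (s - a))
      + ∫ s in (0 : ℝ)..a, g s * (a - s) ^ 2 = 0 := by
    rw [← integral_const_mul, ← integral_const_mul, ← integral_add (hint _ (by fun_prop))
      (hint _ (by fun_prop)), ← integral_add (hint _ (by fun_prop)) (hint _ (by fun_prop))]
    exact (integral_congr fun s _ => by ring).trans integral_zero
  rw [← integral_add_adjacent_intervals (a := 0) (b := a) (c := 1) (hint _ (by fun_prop))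
    (Continuous.intervalIntegrable (by fun_prop) _ _)]
  linear_combination -hleft

theorem factorial_mul_Jn (x d : ℕ) (a : ℝ) :
    x ! * d ! * (a * Jn (x + d) x a)
      = (x + d + 3)! * (a * (1 - a) * (In (x + d) d (1 - a) - In (x + d) x a)) := by
  have hP : a * In (x + d) x a = ∫ s in (0 : ℝ)..a, s ^ x * (1 - s) ^ d * s * (a - s) := by
    rw [mul_In_eq_integral, show x + d - x = d by omega]
    exact integral_congr fun s _ => by ring
  have hQ : (1 - a) * In (x + d) d (1 - a)
      = ∫ s in a..1, s ^ x * (1 - s) ^ d * (1 - s) * (s - a) := by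
    rw [one_sub_mul_In_one_sub_eq_integral, show x + d - d = x by omega]
    exact integral_congr fun s _ => by ring
  have hsplit := mul_integral_sub_one_sub_mul_integral (g := fun s => s ^ x * (1 - s) ^ d)
    (by fun_prop) a
  rw [← hP, ← hQ] at hsplit
  have hbeta := factorial_mul_integral_pow_mul_one_sub_pow_mul_sub x d a
  have hsum := factorial_mul_integral_pow_mul_one_sub_pow_mul_sq x d a
  simp only [Jn, show x + d - x = d by omega]
  push_cast
  linear_combination -(x + d + 3)! * hsplit - a * hbeta - hsum

theorem Jn_eq_zero_iff (x d : ℕ) {a : ℝ} (ha : a ∈ Ioo (0 : ℝ) 1) :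
    Jn (x + d) x a = 0 ↔ In (x + d) x a = In (x + d) d (1 - a) := by
  have ha0 : a ≠ 0 := ha.1.ne'
  have ha1 : 1 - a ≠ 0 := (sub_pos.2 ha.2).ne'
  calc Jn (x + d) x a = 0 ↔ x ! * d ! * (a * Jn (x + d) x a) = 0 := by
        simp [ha0, Nat.factorial_ne_zero]
    _ ↔ (x + d + 3)! * (a * (1 - a) * (In (x + d) d (1 - a) - In (x + d) x a)) = (0 : ℝ) := by
        rw [factorial_mul_Jn]
    _ ↔ In (x + d) x a = In (x + d) d (1 - a) := by
        simp only [mul_eq_zero, Nat.cast_eq_zero, Nat.factorial_ne_zero, ha0, ha1, sub_eq_zero,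
          false_or]
        exact eq_comm

theorem strictMonoOn_inv_mul_integral_sub_mul {f : ℝ → ℝ} {b : ℝ} (hf : Continuous f)
    (hf_nonneg : ∀ s ∈ Icc 0 b, 0 ≤ f s) (hf_pos : ∀ s ∈ Ioo 0 b, 0 < f s) :
    StrictMonoOn (fun c => c⁻¹ * ∫ s in (0 : ℝ)..c, (c - s) * f s) (Ioc 0 b) := by
  intro a ⟨ha, hab⟩ c ⟨hc, hcb⟩ hac
  have hsplit : ∫ s in (0 : ℝ)..c, (c - s) * f s
      = (∫ s in (0 : ℝ)..a, (c - s) * f s) + ∫ s in a..c, (c - s) * f s :=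
    (integral_add_adjacent_intervals (Continuous.intervalIntegrable (by fun_prop) _ _)
      (Continuous.intervalIntegrable (by fun_prop) _ _)).symm
  have hnear : 0 < ∫ s in (0 : ℝ)..a, (a * (c - s) - c * (a - s)) * f s := by
    refine intervalIntegral_pos_of_pos_on (Continuous.intervalIntegrable (by fun_prop) _ _)
      (fun s hs => ?_) ha
    have : 0 < a * (c - s) - c * (a - s) := by nlinarith [hs.1]
    exact mul_pos this (hf_pos s ⟨hs.1, by linarith [hs.2]⟩)
  have hfar : 0 ≤ ∫ s in a..c, (c - s) * f s :=
    integral_nonneg hac.le fun s hs =>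
      mul_nonneg (by linarith [hs.2]) (hf_nonneg s ⟨by linarith [hs.1], by linarith [hs.2]⟩)
  have hnear_eq : ∫ s in (0 : ℝ)..a, (a * (c - s) - c * (a - s)) * f s
      = a * (∫ s in (0 : ℝ)..a, (c - s) * f s) - c * ∫ s in (0 : ℝ)..a, (a - s) * f s := by
    rw [← integral_const_mul, ← integral_const_mul,
      ← integral_sub (Continuous.intervalIntegrable (by fun_prop) _ _)
        (Continuous.intervalIntegrable (by fun_prop) _ _)]
    exact integral_congr fun s _ => by ring
  simp only [← div_eq_inv_mul]
  rw [div_lt_div_iff₀ ha hc, hsplit]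
  nlinarith [mul_nonneg ha.le hfar]

theorem In_strictMonoOn (n y : ℕ) : StrictMonoOn (In n y) (Ioc 0 1) := by
  refine (strictMonoOn_inv_mul_integral_sub_mul (f := fun s => s ^ (y + 1) * (1 - s) ^ (n - y))
    (by fun_prop) (fun s hs => ?_) (fun s hs => ?_)).congr fun c hc => ?_
  · have : 0 ≤ 1 - s := by linarith [hs.2]
    exact mul_nonneg (pow_nonneg hs.1 _) (pow_nonneg this _)
  · have : 0 < 1 - s := by linarith [hs.2]
    exact mul_pos (pow_pos hs.1 _) (pow_pos this _)
  · rw [← inv_mul_cancel_left₀ hc.1.ne' (In n y c), mul_In_eq_integral]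
    exact congrArg _ (integral_congr fun s _ => by ring)

/-- Part (1) of Theorem 3: the iterative Bayes estimate `τ` is the unique zero of
`J_n(·, x)` in `(0, 1)`. -/
theorem Jn_unique_zero (n x : ℕ) (hx : x ≤ n)
    (τ : ℝ) (hτ : τ ∈ Set.Ioo (0 : ℝ) 1)
    (heq : In n x τ = In n (n - x) (1 - τ)) :
    Jn n x τ = 0 ∧ ∀ a ∈ Set.Ioo (0 : ℝ) 1, Jn n x a = 0 → a = τ := by
  obtain ⟨d, rfl⟩ := Nat.exists_eq_add_of_le hx
  rw [show x + d - x = d by omega] at heq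
  have hinj : InjOn (fun a => In (x + d) x a - In (x + d) d (1 - a)) (Ioo 0 1) := by
    refine StrictMonoOn.injOn fun a ha b hb hab => ?_
    have h₁ := In_strictMonoOn (x + d) x ⟨ha.1, ha.2.le⟩ ⟨hb.1, hb.2.le⟩ hab
    have h₂ := In_strictMonoOn (x + d) d ⟨sub_pos.2 hb.2, by linarith [hb.1]⟩
      ⟨sub_pos.2 ha.2, by linarith [ha.1]⟩ (by linarith : 1 - b < 1 - a)
    linarith
  refine ⟨(Jn_eq_zero_iff x d hτ).2 heq, fun a ha hJ => hinj ha hτ ?_⟩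
  change _ - _ = _ - _
  rw [(Jn_eq_zero_iff x d ha).1 hJ, heq, sub_self, sub_self]
end

section
/- Let n and x be natural numbers with x ≤ n. Then for every real number a, (1 − a) I_n(1 − a, n − x) = (n−x+1)!(x+1)!/(n+3)! − ((n−x+1)! x!/(n+2)!) a + Σ_{k=x+2}^{n+3} C(n−x+1, k−x−2) (−1)^{k−x−2} a^k / ((k−1)k). -/
open Finset Nat intervalIntegral

theorem sum_choose_mul_neg_one_pow_div {K : Type*} [Field K] [CharZero K] (N p : ℕ) :
    ∑ j ∈ range (N + 1), (N.choose j : K) * ((-1) ^ j / (p + j + 1)) =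
      (N ! * p ! / (N + p + 1)! : K) := by
  have hfac (k : ℕ) : (k ! : K) ≠ 0 := cast_ne_zero.mpr k.factorial_ne_zero
  induction N generalizing p with
  | zero => simp [factorial_succ, div_mul_cancel_right₀ (hfac p)]
  | succ N ih =>
    have hshift (j : ℕ) : (-1 : K) ^ (j + 1) / (p + (j + 1 : ℕ) + 1) =
        -((-1) ^ j / ((p + 1 : ℕ) + j + 1)) := by
      push_cast; ring
    rw [sum_choose_succ_mul (fun j _ ↦ (-1 : K) ^ j / (p + j + 1)) N]
    simp only [hshift, mul_neg, sum_neg_distrib, ih]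
    rw [show N + (p + 1) + 1 = N + p + 1 + 1 by ring, show N + 1 + p + 1 = N + p + 1 + 1 by ring,
      factorial_succ (N + p + 1), factorial_succ N, factorial_succ p]
    have : (N + p + 1 + 1 : K) ≠ 0 := by exact_mod_cast succ_ne_zero (N + p + 1)
    push_cast
    field_simp
    ring

theorem integral_sub_mul_pow (a : ℝ) (p : ℕ) :
    ∫ u in a..1, (u - a) * u ^ p =
      1 / (p + 2) - a / (p + 1) + a ^ (p + 2) / ((p + 1) * (p + 2)) := by
  have h (u : ℝ) : (u - a) * u ^ p = u ^ (p + 1) - a * u ^ p := by ring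
  simp only [h]
  rw [integral_sub (intervalIntegrable_pow _) ((intervalIntegrable_pow _).const_mul a),
    integral_const_mul, integral_pow, integral_pow]
  field_simp
  push_cast
  ring

theorem one_sub_mul_In_one_sub (n k : ℕ) (a : ℝ) :
    (1 - a) * In n k (1 - a) = ∫ u in a..1, (u - a) * u ^ (n - k) * (1 - u) ^ (k + 1) := by
  have hsubst := smul_integral_comp_sub_mul (a := 0) (b := 1)
    (fun u : ℝ ↦ (u - a) * u ^ (n - k) * (1 - u) ^ (k + 1)) (1 - a) 1
  simp only [mul_one, mul_zero, sub_zero, sub_sub_cancel, smul_eq_mul] at hsubst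
  rw [← hsubst, In, ← integral_const_mul]
  congr 2 with t
  rw [mul_pow]
  ring

theorem integral_sub_mul_pow_mul_one_sub_pow (a : ℝ) (p N : ℕ) :
    ∫ u in a..1, (u - a) * u ^ p * (1 - u) ^ N =
      N ! * (p + 1)! / (N + p + 2)! - N ! * p ! / (N + p + 1)! * a +
        ∑ j ∈ range (N + 1),
          (N.choose j : ℝ) * ((-1) ^ j * a ^ (p + j + 2) / ((p + j + 1) * (p + j + 2))) := by
  have hexpand (u : ℝ) : (u - a) * u ^ p * (1 - u) ^ N =
      ∑ j ∈ range (N + 1), (N.choose j : ℝ) * (-1) ^ j * ((u - a) * u ^ (p + j)) := by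
    rw [sub_eq_neg_add 1 u, add_pow, mul_sum]
    refine sum_congr rfl fun j _ ↦ ?_
    rw [neg_pow, pow_add]
    ring
  have hterm (j : ℕ) : (N.choose j : ℝ) * (-1) ^ j * ∫ u in a..1, (u - a) * u ^ (p + j) =
      (N.choose j : ℝ) * ((-1) ^ j / ((p + 1 : ℕ) + j + 1))
        - a * ((N.choose j : ℝ) * ((-1) ^ j / (p + j + 1)))
        + (N.choose j : ℝ) * ((-1) ^ j * a ^ (p + j + 2) / ((p + j + 1) * (p + j + 2))) := by
    rw [integral_sub_mul_pow]
    push_cast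
    ring
  simp_rw [hexpand]
  rw [integral_finsetSum fun j _ ↦ (by fun_prop : Continuous _).intervalIntegrable _ _]
  simp only [integral_const_mul, hterm, sum_add_distrib, sum_sub_distrib, ← mul_sum,
    sum_choose_mul_neg_one_pow_div]
  rw [show N + (p + 1) + 1 = N + p + 2 by ring]
  ring

/-- Expansion of `(1 − a) I_n(1 − a, n − x)` as a polynomial in `a`. -/
theorem In_one_sub_expansion (n x : ℕ) (hx : x ≤ n) (a : ℝ) :
    (1 - a) * In n (n - x) (1 - a) =
      ((n - x + 1).factorial : ℝ) * ((x + 1).factorial : ℝ) / ((n + 3).factorial : ℝ)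
      - (((n - x + 1).factorial : ℝ) * (x.factorial : ℝ) / ((n + 2).factorial : ℝ)) * a
      + ∑ k ∈ Finset.Icc (x + 2) (n + 3),
          ((n - x + 1).choose (k - x - 2) : ℝ) * (-1) ^ (k - x - 2) * a ^ k
            / (((k : ℝ) - 1) * (k : ℝ)) := by
  rw [one_sub_mul_In_one_sub, Nat.sub_sub_self hx, integral_sub_mul_pow_mul_one_sub_pow,
    show n - x + 1 + x + 2 = n + 3 by omega, show n - x + 1 + x + 1 = n + 2 by omega,
    ← Ico_add_one_right_eq_Icc, sum_Ico_eq_sum_range,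
    show n + 3 + 1 - (x + 2) = n - x + 1 + 1 by omega]
  congr 1
  refine sum_congr rfl fun j _ ↦ ?_
  rw [show x + 2 + j - x - 2 = j by omega, show x + 2 + j = x + j + 2 by ring]
  push_cast
  ring
end

section
/- Let n and x be natural numbers with x ≤ n. Then J_n((x+1)/(n+3), x) > 0. -/
/-!
Write `m = n - x` and `a = (x + 1) / (n + 3)`. At this `a` the two linear terms of `J_n(a, x)`
cancel, leaving `2 a^(x+2) S(a)`, where `S(a) = ∑_r C(n+3, m-r) C(x+r, r) (-a)^r` is the
coefficient of `t^m` in `(1 + t)^(n+3) (1 + a t)^(-(x+1))`. Splitting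
`1 + t = (1 + a t) + (1 - a) t` and expanding binomially rewrites this coefficient as
`∑_j C(n+3, j) C(m-j+2, 2) (1-a)^j a^(m-j)`, a sum of nonnegative terms whose `j = 0` term is
positive when `0 < a ≤ 1`.
-/

open Finset

namespace PowerSeries

variable {R : Type*} [CommRing R]

theorem coeff_one_add_C_mul_X_pow (a : R) (k i : ℕ) :
    coeff i ((1 + C a * X : R⟦X⟧) ^ k) = a ^ i * k.choose i := by
  have : (1 + C a * X : R⟦X⟧) ^ k =
      rescale a (((1 + Polynomial.X) ^ k : Polynomial R) : R⟦X⟧) := by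
    simp [rescale_X]
  rw [this, coeff_rescale, Polynomial.coeff_coe, Polynomial.coeff_one_add_X_pow]

theorem coeff_rescale_invOneSubPow_succ (c : R) (d r : ℕ) :
    coeff r (rescale c (invOneSubPow R (d + 1)).val) = c ^ r * (d + r).choose d := by
  simp [invOneSubPow_val_succ_eq_mk_add_choose]

theorem one_add_C_mul_X_pow_mul_rescale_invOneSubPow (a : R) (d : ℕ) :
    (1 + C a * X : R⟦X⟧) ^ d * rescale (-a) (invOneSubPow R d).val = 1 := by
  have h := congrArg (rescale (-a)) (invOneSubPow R d).inv_val
  rw [invOneSubPow_inv_eq_one_sub_pow, map_mul, map_pow, map_sub, map_one, rescale_X] at h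
  simpa [sub_eq_add_neg] using h

theorem coeff_one_add_X_pow_mul_rescale_invOneSubPow (N x m : ℕ) (a : R) :
    coeff m ((1 + X : R⟦X⟧) ^ N * rescale (-a) (invOneSubPow R (x + 1)).val) =
      ∑ r ∈ range (m + 1), (N.choose (m - r) : R) * (x + r).choose r * (-1) ^ r * a ^ r := by
  rw [coeff_mul, ← Nat.sum_antidiagonal_swap]
  simp only [Prod.fst_swap, Prod.snd_swap]
  rw [Nat.sum_antidiagonal_eq_sum_range_succ (fun r i =>
    coeff i ((1 + X : R⟦X⟧) ^ N) * coeff r (rescale (-a) (invOneSubPow R (x + 1)).val))]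
  refine sum_congr rfl fun r _ => ?_
  have h := coeff_one_add_C_mul_X_pow (1 : R) N (m - r)
  rw [map_one, one_mul] at h
  rw [h, coeff_rescale_invOneSubPow_succ, Nat.choose_symm_add, neg_pow]
  ring

theorem one_add_C_mul_X_pow_add_mul_rescale_invOneSubPow (a : R) (e d : ℕ) :
    (1 + C a * X : R⟦X⟧) ^ (e + d) * rescale (-a) (invOneSubPow R d).val =
      (1 + C a * X) ^ e := by
  rw [pow_add, mul_assoc, one_add_C_mul_X_pow_mul_rescale_invOneSubPow, mul_one]

theorem coeff_one_add_X_pow_mul_rescale_invOneSubPow_eq_sum_one_sub_pow (m x k : ℕ) (a : R) :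
    coeff m ((1 + X : R⟦X⟧) ^ (m + x + 1 + k) * rescale (-a) (invOneSubPow R (x + 1)).val) =
      ∑ j ∈ range (m + 1), ((m + x + 1 + k).choose j : R) * (m - j + k).choose k *
        (1 - a) ^ j * a ^ (m - j) := by
  set N := m + x + 1 + k
  set F := rescale (-a) (invOneSubPow R (x + 1)).val
  have hsplit : (1 + X : R⟦X⟧) = C (1 - a) * X + (1 + C a * X) := by
    rw [map_sub, map_one]; ring
  have hterm (j : ℕ) :
      (C (1 - a) * X : R⟦X⟧) ^ j * (1 + C a * X) ^ (N - j) * (N.choose j : R⟦X⟧) * F =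
        X ^ j * (C ((1 - a) ^ j * N.choose j) * ((1 + C a * X) ^ (N - j) * F)) := by
    rw [mul_pow, ← map_pow, map_mul, map_natCast]; ring
  rw [hsplit, add_pow, sum_mul, map_sum]
  simp only [hterm, coeff_X_pow_mul', coeff_C_mul]
  rw [← sum_subset (range_subset_range.2 (by omega : m + 1 ≤ N + 1))]
  · refine sum_congr rfl fun j hjm => ?_
    have hj : j ≤ m := Nat.lt_succ_iff.1 (mem_range.1 hjm)
    rw [if_pos hj, show N - j = (m - j + k) + (x + 1) by omega,
      one_add_C_mul_X_pow_add_mul_rescale_invOneSubPow, coeff_one_add_C_mul_X_pow,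
      Nat.choose_symm_add]
    ring
  · intro j _ hj
    rw [if_neg (by simpa using hj)]

end PowerSeries

theorem sum_choose_mul_choose_mul_neg_one_pow_mul_pow {R : Type*} [CommRing R]
    (m x k : ℕ) (a : R) :
    ∑ r ∈ range (m + 1),
        ((m + x + 1 + k).choose (m - r) : R) * (x + r).choose r * (-1) ^ r * a ^ r =
      ∑ j ∈ range (m + 1), ((m + x + 1 + k).choose j : R) * (m - j + k).choose k *
        (1 - a) ^ j * a ^ (m - j) := by
  rw [← PowerSeries.coeff_one_add_X_pow_mul_rescale_invOneSubPow,
    PowerSeries.coeff_one_add_X_pow_mul_rescale_invOneSubPow_eq_sum_one_sub_pow]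

theorem sum_choose_mul_one_sub_pow_mul_pow_pos {R : Type*} [CommRing R] [LinearOrder R]
    [IsStrictOrderedRing R] (N m k : ℕ) {a : R} (ha₀ : 0 < a) (ha₁ : a ≤ 1) :
    0 < ∑ j ∈ range (m + 1), (N.choose j : R) * (m - j + k).choose k *
      (1 - a) ^ j * a ^ (m - j) := by
  have h1a : 0 ≤ 1 - a := sub_nonneg.2 ha₁
  refine sum_pos' (fun j _ => by positivity) ⟨0, mem_range.2 m.succ_pos, ?_⟩
  have : 0 < ((m + k).choose k : R) := Nat.cast_pos.2 (Nat.choose_pos (by omega))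
  simpa using mul_pos this (pow_pos ha₀ m)

/-- `J_n((x+1)/(n+3), x) > 0`. -/
theorem Jn_pos_at_lower (n x : ℕ) (hx : x ≤ n) :
    0 < Jn n x (((x : ℝ) + 1) / ((n : ℝ) + 3)) := by
  set a : ℝ := ((x : ℝ) + 1) / ((n : ℝ) + 3)
  have hn₃ : (0 : ℝ) < n + 3 := by positivity
  have ha₀ : 0 < a := by positivity
  have ha₁ : a ≤ 1 := by
    rw [div_le_one hn₃]
    linarith [(Nat.cast_le (α := ℝ)).2 hx]
  have hlinear : ((n : ℝ) - x + 1) * (n + 3) * a = ((n : ℝ) - x + 1) * (x + 1) := by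
    rw [mul_assoc, mul_div_cancel₀ _ hn₃.ne']
  rw [Jn, hlinear, sub_add_cancel, show n + 3 = (n - x) + x + 1 + 2 by omega,
    sum_choose_mul_choose_mul_neg_one_pow_mul_pow]
  have := sum_choose_mul_one_sub_pow_mul_pow_pos (n - x + x + 1 + 2) (n - x) 2 ha₀ ha₁
  positivity
end
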